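/- arXiv:1909.11319 — 2 statements merged into one kernel-verified Lean document; each statement's English description precedes it below -/
import Mathlib

section
/- Let k ≥ 3 be an odd integer and let b be an even integer. Suppose v is a rational number such that either b ≥ 4 and v = [b, 2, …, 2] (with k − 1 copies of 2), or b ≥ 4 and v = [b, −2, …, −2] (with k − 1 copies of −2), or b = 2 and v = [2, −2, …, −2] (with k − 1 copies of −2). Then there exist integers m ≥ 1 and n with n ∉ {0, 1} such that v = [2m+1, 2n−1]. -/
/-!
A run of `j` entries `2` (resp. `-2`) has value `j/(j+1)` (resp. `-j/(j+1)`), and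
`a ∓ j/(j+1) = (a ∓ 1) - 1/(∓(j+1))`, so `[a, ±2, …, ±2] = [a ∓ 1, ∓(j+1)]`.
For `b` even and `j = k - 1` even, `b ∓ 1` is odd and `∓(j+1) = ∓k` is odd, as required.
-/

/-- The (subtractive) continued fraction value of a finite list of rationals:
`cf [] = 0` and `cf (a :: t) = (a - cf t)⁻¹`. -/
def cf : List ℚ → ℚ
  | [] => 0
  | a :: t => (a - cf t)⁻¹

theorem cf_replicate_two (j : ℕ) : cf (List.replicate j 2) = j / (j + 1) := by
  induction j with
  | zero => simp [cf]
  | succ j ih =>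
    have hj : (j : ℚ) + 1 ≠ 0 := by positivity
    rw [List.replicate_succ, cf, ih, show (2 : ℚ) - j / (j + 1) = (j + 1 + 1) / (j + 1) by
      field_simp; ring, inv_div]
    push_cast
    rfl

theorem cf_replicate_neg_two (j : ℕ) : cf (List.replicate j (-2)) = -(j / (j + 1)) := by
  induction j with
  | zero => simp [cf]
  | succ j ih =>
    have hj : (j : ℚ) + 1 ≠ 0 := by positivity
    rw [List.replicate_succ, cf, ih, show (-2 : ℚ) - -(j / (j + 1)) = -((j + 1 + 1) / (j + 1)) by
      field_simp; ring, inv_neg, inv_div]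
    push_cast
    rfl

theorem cf_cons_replicate_two (a : ℚ) (j : ℕ) :
    cf (a :: List.replicate j 2) = cf [a - 1, -(j + 1)] := by
  have hj : (j : ℚ) + 1 ≠ 0 := by positivity
  simp only [cf, cf_replicate_two, sub_zero]
  congr 1
  field_simp
  ring

theorem cf_cons_replicate_neg_two (a : ℚ) (j : ℕ) :
    cf (a :: List.replicate j (-2)) = cf [a + 1, j + 1] := by
  have hj : (j : ℚ) + 1 ≠ 0 := by positivity
  simp only [cf, cf_replicate_neg_two, sub_zero]
  congr 1
  field_simp
  ring

theorem stmt_10 (k : ℕ) (hk : 3 ≤ k) (hkodd : Odd k) (b : ℤ) (hbe : Even b) (v : ℚ)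
    (h : (4 ≤ b ∧ v = cf ((b : ℚ) :: List.replicate (k - 1) (2 : ℚ))) ∨
         (4 ≤ b ∧ v = cf ((b : ℚ) :: List.replicate (k - 1) (-2 : ℚ))) ∨
         (b = 2 ∧ v = cf ((2 : ℚ) :: List.replicate (k - 1) (-2 : ℚ)))) :
    ∃ m n : ℤ, 1 ≤ m ∧ n ≠ 0 ∧ n ≠ 1 ∧
      v = cf [2 * (m : ℚ) + 1, 2 * (n : ℚ) - 1] := by
  obtain ⟨K, rfl⟩ := hkodd
  obtain ⟨c, rfl⟩ := hbe
  have hK : 1 ≤ K := by omega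
  rw [Nat.add_sub_cancel] at h
  replace h : (2 ≤ c ∧ v = cf ((c + c : ℚ) :: List.replicate (2 * K) 2)) ∨
      (1 ≤ c ∧ v = cf ((c + c : ℚ) :: List.replicate (2 * K) (-2))) := by
    push_cast at h
    rcases h with ⟨hc, hv⟩ | ⟨hc, hv⟩ | ⟨hc, hv⟩
    · exact .inl ⟨by omega, hv⟩
    · exact .inr ⟨by omega, hv⟩
    · obtain rfl : c = 1 := by omega
      exact .inr ⟨le_rfl, by norm_num [hv]⟩
  rcases h with ⟨hc, rfl⟩ | ⟨hc, rfl⟩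
  · refine ⟨c - 1, -K, by omega, by omega, by omega, ?_⟩
    rw [cf_cons_replicate_two]
    push_cast
    ring_nf
  · refine ⟨c, K + 1, hc, by omega, by omega, ?_⟩
    rw [cf_cons_replicate_neg_two]
    push_cast
    ring_nf
end

section
/- Let a be a nonzero integer and let b, c ≥ 1 be integers. Then [a, −2, …, −2, 2, …, 2] (with b copies of −2 followed by c copies of 2 after the entry a) = [a + 1, b + 1, 2, −c]. -/
/-!
Since `cf (x :: l) = (x - cf l)⁻¹`, raising the head by one compensates raising the value of the
tail by one, so it suffices to show that the tail `[b + 1, 2, -c]` has value one more than the tail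
`[-2, …, -2, 2, …, 2]`. The maps `x ↦ (-2 - x)⁻¹` and `x ↦ (2 - x)⁻¹` are parabolic Möbius
transformations with fixed points `-1` and `1`; conjugated by `x ↦ (x + 1)⁻¹`, resp.
`x ↦ (1 - x)⁻¹`, they become the translation by one, which evaluates both blocks of repeated
entries in closed form.
-/

@[simp]
lemma cf_nil : cf [] = 0 := rfl

@[simp]
lemma cf_cons (x : ℚ) (l : List ℚ) : cf (x :: l) = (x - cf l)⁻¹ := rfl

lemma cf_add_one_cons_of_cf_eq_add_one {l l' : List ℚ} (h : cf l' = cf l + 1) (x : ℚ) :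
    cf ((x + 1) :: l') = cf (x :: l) := by
  rw [cf_cons, cf_cons, h, add_sub_add_right_eq_sub]

lemma inv_cf_neg_two_cons_add_one {l : List ℚ} (h : -1 < cf l) :
    (cf (-2 :: l) + 1)⁻¹ = 1 + (cf l + 1)⁻¹ := by
  have h₁ : cf l + 1 ≠ 0 := by linarith
  have h₂ : -1 - cf l ≠ 0 := by linarith
  have h₃ : -2 - cf l ≠ 0 := by linarith
  rw [cf_cons, show (-2 - cf l)⁻¹ + 1 = (-1 - cf l) / (-2 - cf l) by field_simp; ring, inv_div]
  field_simp
  ring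

lemma inv_cf_replicate_neg_two_append_add_one (b : ℕ) {l : List ℚ} (h : -1 < cf l) :
    (cf (List.replicate b (-2) ++ l) + 1)⁻¹ = b + (cf l + 1)⁻¹ := by
  induction b with
  | zero => simp
  | succ b ih =>
    have hpos : 0 < (cf (List.replicate b (-2) ++ l) + 1)⁻¹ := by
      rw [ih]
      have : 0 < (cf l + 1)⁻¹ := inv_pos.mpr (by linarith)
      positivity
    have hgt : -1 < cf (List.replicate b (-2) ++ l) := by linarith [inv_pos.mp hpos]
    rw [List.replicate_succ, List.cons_append, inv_cf_neg_two_cons_add_one hgt, ih]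
    push_cast
    ring

lemma inv_one_sub_cf_two_cons {l : List ℚ} (h : cf l < 1) :
    (1 - cf (2 :: l))⁻¹ = 1 + (1 - cf l)⁻¹ := by
  have h₁ : 1 - cf l ≠ 0 := by linarith
  have h₂ : 2 - cf l ≠ 0 := by linarith
  rw [cf_cons, show 1 - (2 - cf l)⁻¹ = (1 - cf l) / (2 - cf l) by field_simp; ring, inv_div]
  field_simp
  ring

lemma inv_one_sub_cf_replicate_two_append (c : ℕ) {l : List ℚ} (h : cf l < 1) :
    (1 - cf (List.replicate c 2 ++ l))⁻¹ = c + (1 - cf l)⁻¹ := by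
  induction c with
  | zero => simp
  | succ c ih =>
    have hpos : 0 < (1 - cf (List.replicate c 2 ++ l))⁻¹ := by
      rw [ih]
      have : 0 < (1 - cf l)⁻¹ := inv_pos.mpr (by linarith)
      positivity
    have hlt : cf (List.replicate c 2 ++ l) < 1 := by linarith [inv_pos.mp hpos]
    rw [List.replicate_succ, List.cons_append, inv_one_sub_cf_two_cons hlt, ih]
    push_cast
    ring

lemma cf_replicate_two_s14 (c : ℕ) : cf (List.replicate c 2) = 1 - ((c : ℚ) + 1)⁻¹ := by
  have h := inv_one_sub_cf_replicate_two_append c (l := []) (by simp)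
  rw [List.append_nil, cf_nil, sub_zero, inv_one] at h
  rw [← h, inv_inv, sub_sub_cancel]

lemma cf_replicate_neg_two_append_replicate_two_add_one (b c : ℕ) :
    cf (List.replicate b (-2) ++ List.replicate c 2) + 1 =
      ((b : ℚ) + (2 - ((c : ℚ) + 1)⁻¹)⁻¹)⁻¹ := by
  have h : -1 < cf (List.replicate c 2) := by
    rw [cf_replicate_two_s14]
    have : ((c : ℚ) + 1)⁻¹ ≤ 1 := inv_le_one_of_one_le₀ (by simp)
    linarith
  rw [← inv_inv (cf _ + 1), inv_cf_replicate_neg_two_append_add_one b h, cf_replicate_two_s14]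
  ring

theorem stmt_14_general (a : ℤ) (b c : ℕ) (hc : 1 ≤ c) :
    cf ((a : ℚ) :: (List.replicate b (-2 : ℚ) ++ List.replicate c (2 : ℚ))) =
      cf [(a : ℚ) + 1, (b : ℚ) + 1, 2, -(c : ℚ)] := by
  refine (cf_add_one_cons_of_cf_eq_add_one ?_ _).symm
  have hc₀ : (0 : ℚ) < c := by exact_mod_cast hc
  have hc₁ : (c : ℚ) + 1 ≠ 0 := by positivity
  have hc₂ : 2 * (c : ℚ) + 1 ≠ 0 := by positivity
  rw [cf_replicate_neg_two_append_replicate_two_add_one]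
  simp only [cf_cons, cf_nil, sub_zero, inv_neg, sub_neg_eq_add]
  rw [show 2 + (c : ℚ)⁻¹ = (2 * c + 1) / c by field_simp,
    show 2 - ((c : ℚ) + 1)⁻¹ = (2 * c + 1) / (c + 1) by field_simp; ring, inv_div, inv_div]
  congr 1
  field_simp
  ring

theorem stmt_14 (a : ℤ) (ha : a ≠ 0) (b c : ℕ) (hb : 1 ≤ b) (hc : 1 ≤ c) :
    cf ((a : ℚ) :: (List.replicate b (-2 : ℚ) ++ List.replicate c (2 : ℚ))) =
      cf [(a : ℚ) + 1, (b : ℚ) + 1, 2, -(c : ℚ)] :=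
  stmt_14_general a b c hc
end
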